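/- arXiv:1702.04080 — 2 statements merged into one kernel-verified Lean document; each statement's English description precedes it below -/
import Mathlib

section
/- Sum-capacity conservation for one polarization step over two different channels: for any two B-DMCs W₁ and W₂, the bit channels W⁻ and W⁺ of the single-step polar transform satisfy I(W⁻) + I(W⁺) = I(W₁) + I(W₂). -/
/-- A binary-input discrete memoryless channel (B-DMC) with finite output alphabet `Y`:
nonnegative transition probabilities summing to one for each input. -/
def IsBDMC {Y : Type} [Fintype Y] (W : ZMod 2 → Y → ℝ) : Prop :=
  (∀ x y, 0 ≤ W x y) ∧ ∀ x, ∑ y, W x y = 1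

/-- The symmetric capacity `I(W)` of a B-DMC (terms with `W x y = 0` vanish automatically). -/
noncomputable def symCap {Y : Type} [Fintype Y] (W : ZMod 2 → Y → ℝ) : ℝ :=
  ∑ x : ZMod 2, ∑ y, (1 / 2) * W x y * Real.logb 2 (W x y / ((W 0 y + W 1 y) / 2))

/-- The Bhattacharyya parameter `Z(W)` of a B-DMC. -/
noncomputable def bhat {Y : Type} [Fintype Y] (W : ZMod 2 → Y → ℝ) : ℝ :=
  ∑ y, Real.sqrt (W 0 y * W 1 y)

/-- The first (minus) bit channel of the single-step polar transform of `W₁` and `W₂`. -/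
noncomputable def polarMinus {Y₁ Y₂ : Type} (W₁ : ZMod 2 → Y₁ → ℝ) (W₂ : ZMod 2 → Y₂ → ℝ) :
    ZMod 2 → Y₁ × Y₂ → ℝ :=
  fun u₁ y => (1 / 2) * ∑ u₂ : ZMod 2, W₁ (u₁ + u₂) y.1 * W₂ u₂ y.2

/-- The second (plus) bit channel of the single-step polar transform of `W₁` and `W₂`. -/
noncomputable def polarPlus {Y₁ Y₂ : Type} (W₁ : ZMod 2 → Y₁ → ℝ) (W₂ : ZMod 2 → Y₂ → ℝ) :
    ZMod 2 → Y₁ × Y₂ × ZMod 2 → ℝ :=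
  fun u₂ y => (1 / 2) * W₁ (y.2.2 + u₂) y.1 * W₂ u₂ y.2.1

/-- The zero-capacity (punctured) channel with singleton output alphabet. -/
def puncturedChannel : ZMod 2 → PUnit → ℝ := fun _ _ => 1

/-!
Let `i_W(x; y) = log₂ (W x y / ((W 0 y + W 1 y) / 2))` be the information density of `W`. With
`u₁, u₂` uniform bits and `y₁, y₂` the outputs of `W₁` at `u₁ + u₂` and of `W₂` at `u₂`, each of
the four capacities is the expectation of an information density. On the support,
`i_{W⁻}(u₁; y₁, y₂) + i_{W⁺}(u₂; y₁, y₂, u₁) = i_{W₁}(u₁ + u₂; y₁) + i_{W₂}(u₂; y₂)` (chain rule):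
the output law of `W⁺` at `(y₁, y₂, u₁)` is `W⁻(u₁; y₁, y₂)` and that of `W⁻` is the product of
the output laws of `W₁` and `W₂`, so the two logarithms on the left telescope.
-/

lemma ZMod.sum_univ_two {M : Type*} [AddCommMonoid M] (f : ZMod 2 → M) :
    ∑ x, f x = f 0 + f 1 :=
  Fin.sum_univ_two f

lemma sum_comp_add_right {G M : Type*} [AddGroup G] [Fintype G] [AddCommMonoid M] (f : G → M)
    (a : G) : ∑ x, f (x + a) = ∑ x, f x :=
  Fintype.sum_equiv (Equiv.addRight a) _ _ fun _ => rfl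

lemma apply_zero_add_apply_one_pos {Y : Type*} {W : ZMod 2 → Y → ℝ} (hW : ∀ x y, 0 ≤ W x y)
    {x : ZMod 2} {y : Y} (h : W x y ≠ 0) : 0 < W 0 y + W 1 y :=
  calc 0 < W x y := (hW x y).lt_of_ne' h
    _ ≤ ∑ x', W x' y := Finset.single_le_sum (fun x' _ => hW x' y) (Finset.mem_univ x)
    _ = W 0 y + W 1 y := ZMod.sum_univ_two _

noncomputable def infoDensity {Y : Type*} (W : ZMod 2 → Y → ℝ) (x : ZMod 2) (y : Y) : ℝ :=
  Real.logb 2 (W x y / ((W 0 y + W 1 y) / 2))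

lemma symCap_eq_sum_infoDensity {Y : Type} [Fintype Y] (W : ZMod 2 → Y → ℝ) :
    symCap W = ∑ x, ∑ y, (1 / 2) * W x y * infoDensity W x y :=
  rfl

section PolarTransform

variable {Y₁ Y₂ : Type} (W₁ : ZMod 2 → Y₁ → ℝ) (W₂ : ZMod 2 → Y₂ → ℝ)

lemma polarMinus_zero_add_one (y₁ : Y₁) (y₂ : Y₂) :
    polarMinus W₁ W₂ 0 (y₁, y₂) + polarMinus W₁ W₂ 1 (y₁, y₂) =
      (W₁ 0 y₁ + W₁ 1 y₁) * (W₂ 0 y₂ + W₂ 1 y₂) / 2 := by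
  simp only [polarMinus, ZMod.sum_univ_two, zero_add, add_zero,
    show (1 + 1 : ZMod 2) = 0 from rfl]
  ring

lemma polarPlus_zero_add_one (y₁ : Y₁) (y₂ : Y₂) (u₁ : ZMod 2) :
    polarPlus W₁ W₂ 0 (y₁, y₂, u₁) + polarPlus W₁ W₂ 1 (y₁, y₂, u₁) =
      polarMinus W₁ W₂ u₁ (y₁, y₂) := by
  simp only [polarPlus, polarMinus, ZMod.sum_univ_two]
  ring

variable {W₁ W₂}

lemma polarPlus_nonneg (hW₁ : ∀ x y, 0 ≤ W₁ x y) (hW₂ : ∀ x y, 0 ≤ W₂ x y) (u₂ : ZMod 2)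
    (y : Y₁ × Y₂ × ZMod 2) : 0 ≤ polarPlus W₁ W₂ u₂ y :=
  mul_nonneg (mul_nonneg (by norm_num) (hW₁ _ _)) (hW₂ _ _)

lemma infoDensity_polarMinus_add_infoDensity_polarPlus (hW₁ : ∀ x y, 0 ≤ W₁ x y)
    (hW₂ : ∀ x y, 0 ≤ W₂ x y) {u₁ u₂ : ZMod 2} {y₁ : Y₁} {y₂ : Y₂}
    (h : W₁ (u₁ + u₂) y₁ * W₂ u₂ y₂ ≠ 0) :
    infoDensity (polarMinus W₁ W₂) u₁ (y₁, y₂) + infoDensity (polarPlus W₁ W₂) u₂ (y₁, y₂, u₁) =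
      infoDensity W₁ (u₁ + u₂) y₁ + infoDensity W₂ u₂ y₂ := by
  obtain ⟨hc₁, hc₂⟩ := mul_ne_zero_iff.mp h
  have ha₁ := apply_zero_add_apply_one_pos hW₁ hc₁
  have ha₂ := apply_zero_add_apply_one_pos hW₂ hc₂
  have hplus : polarPlus W₁ W₂ u₂ (y₁, y₂, u₁) = 1 / 2 * W₁ (u₁ + u₂) y₁ * W₂ u₂ y₂ := rfl
  have hm : 0 < polarPlus W₁ W₂ 0 (y₁, y₂, u₁) + polarPlus W₁ W₂ 1 (y₁, y₂, u₁) :=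
    apply_zero_add_apply_one_pos (polarPlus_nonneg hW₁ hW₂) (by rw [hplus]; positivity)
  rw [polarPlus_zero_add_one] at hm
  unfold infoDensity
  rw [polarMinus_zero_add_one, polarPlus_zero_add_one, hplus, ← Real.logb_mul, ← Real.logb_mul]
  · congr 1
    field_simp
  all_goals positivity

variable [Fintype Y₁] [Fintype Y₂] (W₁ W₂)

noncomputable def polarExpect (F : ZMod 2 → ZMod 2 → Y₁ → Y₂ → ℝ) : ℝ :=
  ∑ u₂, ∑ y₂, ∑ u₁, ∑ y₁, (1 / 4) * (W₁ (u₁ + u₂) y₁ * W₂ u₂ y₂) * F u₁ u₂ y₁ y₂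

lemma polarExpect_add (F G : ZMod 2 → ZMod 2 → Y₁ → Y₂ → ℝ) :
    polarExpect W₁ W₂ (F + G) = polarExpect W₁ W₂ F + polarExpect W₁ W₂ G := by
  simp only [polarExpect, Pi.add_apply, mul_add, Finset.sum_add_distrib]

lemma polarExpect_congr {F G : ZMod 2 → ZMod 2 → Y₁ → Y₂ → ℝ}
    (h : ∀ u₁ u₂ y₁ y₂, W₁ (u₁ + u₂) y₁ * W₂ u₂ y₂ ≠ 0 → F u₁ u₂ y₁ y₂ = G u₁ u₂ y₁ y₂) :
    polarExpect W₁ W₂ F = polarExpect W₁ W₂ G := by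
  refine Finset.sum_congr rfl fun u₂ _ => Finset.sum_congr rfl fun y₂ _ =>
    Finset.sum_congr rfl fun u₁ _ => Finset.sum_congr rfl fun y₁ _ => ?_
  by_cases hw : W₁ (u₁ + u₂) y₁ * W₂ u₂ y₂ = 0
  · simp [hw]
  · rw [h u₁ u₂ y₁ y₂ hw]

lemma symCap_polarMinus :
    symCap (polarMinus W₁ W₂) =
      polarExpect W₁ W₂ fun u₁ _ y₁ y₂ => infoDensity (polarMinus W₁ W₂) u₁ (y₁, y₂) := by
  rw [symCap_eq_sum_infoDensity]
  calc _
      = ∑ u₁, ∑ y : Y₁ × Y₂, ∑ u₂, (1 / 4) * (W₁ (u₁ + u₂) y.1 * W₂ u₂ y.2) *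
          infoDensity (polarMinus W₁ W₂) u₁ y := by
        refine Finset.sum_congr rfl fun u₁ _ => Finset.sum_congr rfl fun y _ => ?_
        generalize infoDensity (polarMinus W₁ W₂) u₁ y = L
        simp only [polarMinus, Finset.mul_sum, Finset.sum_mul]
        exact Finset.sum_congr rfl fun u₂ _ => by ring
    _ = ∑ u₂, ∑ u₁, ∑ y : Y₁ × Y₂, (1 / 4) * (W₁ (u₁ + u₂) y.1 * W₂ u₂ y.2) *
          infoDensity (polarMinus W₁ W₂) u₁ y :=
        Finset.sum_comm_cycle
    _ = _ := by
        simp only [polarExpect, Fintype.sum_prod_type_right]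
        exact Finset.sum_congr rfl fun u₂ _ => Finset.sum_comm

lemma symCap_polarPlus :
    symCap (polarPlus W₁ W₂) =
      polarExpect W₁ W₂ fun u₁ u₂ y₁ y₂ => infoDensity (polarPlus W₁ W₂) u₂ (y₁, y₂, u₁) := by
  simp only [symCap_eq_sum_infoDensity, polarExpect, Fintype.sum_prod_type]
  refine Finset.sum_congr rfl fun u₂ _ => Finset.sum_comm_cycle.symm.trans ?_
  refine Finset.sum_congr rfl fun y₂ _ => Finset.sum_congr rfl fun u₁ _ =>
    Finset.sum_congr rfl fun y₁ _ => ?_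
  simp only [polarPlus]
  ring

lemma symCap_eq_polarExpect_left (h₂ : ∀ x, ∑ y, W₂ x y = 1) :
    symCap W₁ = polarExpect W₁ W₂ fun u₁ u₂ y₁ _ => infoDensity W₁ (u₁ + u₂) y₁ := by
  have inner (u₂ : ZMod 2) :
      ∑ u₁, ∑ y₁, W₁ (u₁ + u₂) y₁ * infoDensity W₁ (u₁ + u₂) y₁ = 2 * symCap W₁ := by
    rw [sum_comp_add_right (fun x => ∑ y₁, W₁ x y₁ * infoDensity W₁ x y₁),
      symCap_eq_sum_infoDensity, Finset.mul_sum]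
    refine Finset.sum_congr rfl fun x _ => ?_
    rw [Finset.mul_sum]
    exact Finset.sum_congr rfl fun y₁ _ => by ring
  symm
  calc polarExpect W₁ W₂ (fun u₁ u₂ y₁ _ => infoDensity W₁ (u₁ + u₂) y₁)
      = ∑ u₂, ∑ y₂, W₂ u₂ y₂ * ((1 / 4) *
          ∑ u₁, ∑ y₁, W₁ (u₁ + u₂) y₁ * infoDensity W₁ (u₁ + u₂) y₁) := by
        refine Finset.sum_congr rfl fun u₂ _ => Finset.sum_congr rfl fun y₂ _ => ?_
        simp only [Finset.mul_sum]
        exact Finset.sum_congr rfl fun u₁ _ => Finset.sum_congr rfl fun y₁ _ => by ring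
    _ = symCap W₁ := by
        simp only [inner, ← Finset.sum_mul, h₂, ZMod.sum_univ_two]
        ring

lemma symCap_eq_polarExpect_right (h₁ : ∀ x, ∑ y, W₁ x y = 1) :
    symCap W₂ = polarExpect W₁ W₂ fun _ u₂ _ y₂ => infoDensity W₂ u₂ y₂ := by
  rw [symCap_eq_sum_infoDensity]
  refine Finset.sum_congr rfl fun u₂ _ => Finset.sum_congr rfl fun y₂ _ => ?_
  have marginal (u₁ : ZMod 2) :
      ∑ y₁, (1 / 4) * (W₁ (u₁ + u₂) y₁ * W₂ u₂ y₂) * infoDensity W₂ u₂ y₂ =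
        (1 / 4) * W₂ u₂ y₂ * infoDensity W₂ u₂ y₂ :=
    calc _ = (∑ y₁, W₁ (u₁ + u₂) y₁) * ((1 / 4) * W₂ u₂ y₂ * infoDensity W₂ u₂ y₂) := by
          rw [Finset.sum_mul]
          exact Finset.sum_congr rfl fun y₁ _ => by ring
      _ = _ := by rw [h₁, one_mul]
  rw [Finset.sum_congr rfl fun u₁ _ => marginal u₁, ZMod.sum_univ_two]
  ring

end PolarTransform

/-- Sum-capacity conservation for one polarization step over two
different channels: `I(W⁻) + I(W⁺) = I(W₁) + I(W₂)`. -/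
theorem sum_capacity_one_step {Y₁ Y₂ : Type} [Fintype Y₁] [Fintype Y₂]
    (W₁ : ZMod 2 → Y₁ → ℝ) (W₂ : ZMod 2 → Y₂ → ℝ)
    (h₁ : IsBDMC W₁) (h₂ : IsBDMC W₂) :
    symCap (polarMinus W₁ W₂) + symCap (polarPlus W₁ W₂) = symCap W₁ + symCap W₂ := by
  obtain ⟨hW₁, hW₁_sum⟩ := h₁
  obtain ⟨hW₂, hW₂_sum⟩ := h₂
  rw [symCap_polarMinus, symCap_polarPlus, ← polarExpect_add,
    symCap_eq_polarExpect_left W₁ W₂ hW₂_sum, symCap_eq_polarExpect_right W₁ W₂ hW₁_sum,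
    ← polarExpect_add]
  exact polarExpect_congr W₁ W₂ fun _ _ _ _ hw =>
    infoDensity_polarMinus_add_infoDensity_polarPlus hW₁ hW₂ hw
end

section
/- Chain-rule sum-capacity conservation for the full polar transform over possibly different channels: for any N = 2ⁿ and any B-DMCs W₁,…,W_N assigned to the N output coordinates of the length-N polar transform, the bit channels satisfy Σ_{i=1}^{N} I(W_N^{(i)}) = Σ_{j=1}^{N} I(W_j). -/
open Matrix Finset Filter

/-- The 2×2 polar kernel `F = [[1,0],[1,1]]` over GF(2). -/
def polarKernel : Matrix (Fin 2) (Fin 2) (ZMod 2) := !![1, 0; 1, 1]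

/-- Kronecker product of square GF(2) matrices, the product index set identified with
`Fin (a*b)` via lexicographic pairing. -/
def kron {a b : ℕ} (A : Matrix (Fin a) (Fin a) (ZMod 2)) (B : Matrix (Fin b) (Fin b) (ZMod 2)) :
    Matrix (Fin (a * b)) (Fin (a * b)) (ZMod 2) :=
  Matrix.reindex finProdFinEquiv finProdFinEquiv (Matrix.kroneckerMap (· * ·) A B)

/-- The `n`-fold Kronecker power; `kronPow A 0` is the 1×1 identity. -/
def kronPow (A : Matrix (Fin 2) (Fin 2) (ZMod 2)) :
    (n : ℕ) → Matrix (Fin (2 ^ n)) (Fin (2 ^ n)) (ZMod 2)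
  | 0 => 1
  | n + 1 => Matrix.reindex (finCongr (by ring)) (finCongr (by ring)) (kron A (kronPow A n))

/-- The bit-reversal permutation on `Fin (2^n)`: reverse the `n` binary digits. -/
def bitRev (n : ℕ) : Equiv.Perm (Fin (2 ^ n)) :=
  finFunctionFinEquiv.symm.trans
    ((Equiv.arrowCongr Fin.revPerm (Equiv.refl (Fin 2))).trans finFunctionFinEquiv)

/-- The polar transform matrix `G_N = B_N · F^{⊗n}` over GF(2), `N = 2^n`, where `B_N` is the
bit-reversal permutation matrix. -/
def polarG (n : ℕ) : Matrix (Fin (2 ^ n)) (Fin (2 ^ n)) (ZMod 2) :=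
  ((bitRev n).permMatrix (ZMod 2)) * kronPow polarKernel n

/-- Polar encoding `x = u · G_N`. -/
def polarEncode (n : ℕ) (u : Fin (2 ^ n) → ZMod 2) : Fin (2 ^ n) → ZMod 2 :=
  Matrix.vecMul u (polarG n)

open scoped Classical in
/-- The `i`-th bit channel `W_N^{(i)}` of the length-`N = 2^n` polar transform where output
coordinate `j` is transmitted through the B-DMC `W j` (output alphabet `Y j`):  input `u_i`,
output `(y₁,…,y_N, u₁,…,u_{i-1})`, and transition probability
`2^{-(N-1)} · Σ_{u_{i+1}^N} Π_j W_j(x_j)(y_j)` with `x = u·G_N`. -/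
noncomputable def bitChannel (n : ℕ) (Y : Fin (2 ^ n) → Type) [∀ j, Fintype (Y j)]
    (W : ∀ j, ZMod 2 → Y j → ℝ) (i : Fin (2 ^ n)) :
    ZMod 2 → ((∀ j, Y j) × (Fin i.val → ZMod 2)) → ℝ :=
  fun ui out =>
    (1 / 2 : ℝ) ^ (2 ^ n - 1) *
      ∑ u ∈ Finset.univ.filter (fun u : Fin (2 ^ n) → ZMod 2 =>
          u i = ui ∧ ∀ j : Fin i.val, u (Fin.castLE i.isLt.le j) = out.2 j),
        ∏ j, W j (polarEncode n u j) (out.1 j)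

open scoped Classical in
/-- The good index set `𝒢_N(β) = { i : Z(W_N^{(i)}) < 2^{-N^β}/N }`. -/
noncomputable def goodSet (n : ℕ) (Y : Fin (2 ^ n) → Type) [∀ j, Fintype (Y j)]
    (W : ∀ j, ZMod 2 → Y j → ℝ) (β : ℝ) : Finset (Fin (2 ^ n)) :=
  Finset.univ.filter fun i =>
    bhat (bitChannel n Y W i) < (2 : ℝ) ^ (-((2 : ℝ) ^ n) ^ β) / (2 : ℝ) ^ n

/-!
Feed independent uniform bits `U` into the transform and let
`P(u, y) = ∏ⱼ Wⱼ(xⱼ(u), yⱼ) / 2` be the joint law of `(U, Y)`. Half of the `i`-th bit channel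
is the marginal of `P` on `(Y, U₁, …, Uᵢ)`, so its capacity is `1 + h(i) - h(i-1)`, where `h(k)`
is `Σ p log₂ p` over the marginal law of `(Y, U₁, …, U_k)`. The sum over `i` telescopes to
`N + h(N) - h(0)`, i.e. `N - H(U | Y)`. Since `G_N` is invertible, `u ↦ u·G_N` is a bijection,
so in the coordinates `x = u·G_N` both `P` and its `Y`-marginal are product laws; `Σ p log₂ p` is
additive over products, which splits `h(N)` and `h(0)` into the corresponding terms of the
single channels, and `I(Wⱼ) = 1 + Σ p log₂ p (input–output) - Σ p log₂ p (output)`.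
-/

noncomputable def mulLogb (b x : ℝ) : ℝ := x * Real.logb b x

lemma mulLogb_prod {ι : Type*} (s : Finset ι) (b : ℝ) (p : ι → ℝ) :
    mulLogb b (∏ j ∈ s, p j) = ∑ j ∈ s, (∏ k ∈ s, p k) * Real.logb b (p j) := by
  by_cases hp : ∀ j ∈ s, p j ≠ 0
  · rw [mulLogb, Real.logb_prod s p hp, Finset.mul_sum]
  · -- a vanishing factor kills both sides
    push Not at hp
    obtain ⟨j, hj, hpj⟩ := hp
    simp [mulLogb, Finset.prod_eq_zero hj hpj]

lemma sum_prod_mul_apply {ι : Type*} [Fintype ι] [DecidableEq ι] {Z : ι → Type*}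
    [∀ j, Fintype (Z j)] (g : ∀ j, Z j → ℝ) (hg : ∀ j, ∑ t, g j t = 1) (j : ι) (φ : Z j → ℝ) :
    ∑ z : ∀ k, Z k, (∏ k, g k (z k)) * φ (z j) = ∑ t, g j t * φ t := by
  rw [← (Equiv.piSplitAt j Z).symm.sum_comp, Fintype.sum_prod_type]
  refine Finset.sum_congr rfl fun t _ => ?_
  have hrest (r : ∀ k : {k // k ≠ j}, Z k) (k : {k // k ≠ j}) :
      (Equiv.piSplitAt j Z).symm (t, r) k = r k := dif_neg k.2
  simp_rw [Fintype.prod_eq_mul_prod_subtype_ne _ j, hrest]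
  simp [Equiv.piSplitAt, mul_right_comm _ _ (φ t), ← Finset.mul_sum, ← Fintype.prod_sum, hg]

lemma sum_mulLogb_prod {ι : Type*} [Fintype ι] [DecidableEq ι] {Z : ι → Type*}
    [∀ j, Fintype (Z j)] (b : ℝ) (g : ∀ j, Z j → ℝ) (hg : ∀ j, ∑ t, g j t = 1) :
    ∑ z : ∀ j, Z j, mulLogb b (∏ j, g j (z j)) = ∑ j, ∑ t, mulLogb b (g j t) := by
  simp_rw [mulLogb_prod]
  rw [Finset.sum_comm]
  exact Finset.sum_congr rfl fun j _ => sum_prod_mul_apply g hg j (Real.logb b ∘ g j)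

lemma mul_logb_two_mul_div {q m : ℝ} (hq : 0 ≤ q) (hqm : q ≤ m) :
    q * Real.logb 2 (2 * q / m) = q + mulLogb 2 q - q * Real.logb 2 m := by
  rcases hq.eq_or_lt with rfl | hq
  · simp [mulLogb]
  rw [Real.logb_div (by positivity) (hq.trans_le hqm).ne', Real.logb_mul two_ne_zero hq.ne',
    Real.logb_self_eq_one one_lt_two, mulLogb]
  ring

lemma symCap_eq_one_add_sub {O : Type} [Fintype O] (K : ZMod 2 → O → ℝ)
    (hK : ∀ x o, 0 ≤ K x o) (hK₂ : ∑ x, ∑ o, K x o = 2) :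
    symCap K = 1 + ∑ x, ∑ o, mulLogb 2 (K x o / 2) - ∑ o, mulLogb 2 (∑ x, K x o / 2) := by
  have hout (o : O) : (K 0 o + K 1 o) / 2 = ∑ x, K x o / 2 := by
    rw [show ∑ x, K x o / 2 = K 0 o / 2 + K 1 o / 2 from Fin.sum_univ_two _]
    ring
  have hterm (x : ZMod 2) (o : O) : 1 / 2 * K x o * Real.logb 2 (K x o / ((K 0 o + K 1 o) / 2))
      = K x o / 2 + mulLogb 2 (K x o / 2) - K x o / 2 * Real.logb 2 (∑ x, K x o / 2) := by
    rw [hout, ← mul_logb_two_mul_div (by linarith [hK x o])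
      (Finset.single_le_sum (f := fun x => K x o / 2) (fun x _ => by linarith [hK x o])
        (Finset.mem_univ x))]
    ring_nf
  simp only [symCap, hterm, Finset.sum_sub_distrib, Finset.sum_add_distrib]
  have hmass : ∑ x, ∑ o, K x o / 2 = 1 := by
    simp only [← Finset.sum_div, hK₂, div_self (two_ne_zero (α := ℝ))]
  have hmarg : ∑ x, ∑ o, K x o / 2 * Real.logb 2 (∑ x, K x o / 2)
      = ∑ o, mulLogb 2 (∑ x, K x o / 2) := by
    rw [Finset.sum_comm]
    simp only [← Finset.sum_mul, mulLogb]
  rw [hmass, hmarg]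

lemma IsBDMC.sum_sum_eq_two {Y : Type} [Fintype Y] {W : ZMod 2 → Y → ℝ} (hW : IsBDMC W) :
    ∑ x, ∑ y, W x y = 2 := by
  simp [hW.2]

lemma IsBDMC.sum_sum_div_two {Y : Type} [Fintype Y] {W : ZMod 2 → Y → ℝ} (hW : IsBDMC W) :
    ∑ y, ∑ x, W x y / 2 = 1 := by
  rw [Finset.sum_comm]
  simp only [← Finset.sum_div, hW.sum_sum_eq_two, div_self (two_ne_zero (α := ℝ))]

lemma Fin.sum_sub_telescope {M : Type*} [AddCommGroup M] {N : ℕ} (f : (k : ℕ) → k ≤ N → M) :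
    ∑ i : Fin N, (f (i + 1) i.isLt - f i i.isLt.le) = f N le_rfl - f 0 N.zero_le := by
  let g (k : ℕ) : M := if hk : k ≤ N then f k hk else 0
  have hg := Finset.sum_range_sub g N
  rw [← Fin.sum_univ_eq_sum_range (fun k => g (k + 1) - g k)] at hg
  simpa [g, Nat.succ_le_of_lt, Fin.is_le'] using hg

section ChainRule

variable {Ω : Type} {N : ℕ} (P : (Fin N → ZMod 2) → Ω → ℝ)

def prefixMarginal (k : ℕ) (hk : k ≤ N) (y : Ω) (v : Fin k → ZMod 2) : ℝ :=
  ∑ u with Fin.take k hk u = v, P u y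

noncomputable def prefixNegEntropy [Fintype Ω] (k : ℕ) (hk : k ≤ N) : ℝ :=
  ∑ y, ∑ v, mulLogb 2 (prefixMarginal P k hk y v)

def prefixChannel (i : Fin N) : ZMod 2 → Ω × (Fin i → ZMod 2) → ℝ :=
  fun x o => 2 * prefixMarginal P (i + 1) i.isLt o.1 (Fin.snoc o.2 x)

lemma sum_prefixMarginal (k : ℕ) (hk : k ≤ N) (y : Ω) :
    ∑ v, prefixMarginal P k hk y v = ∑ u, P u y :=
  Finset.sum_fiberwise _ _ _

lemma sum_prefixMarginal_snoc (k : ℕ) (hk : k < N) (y : Ω) (v : Fin k → ZMod 2) :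
    ∑ c, prefixMarginal P (k + 1) hk y (Fin.snoc v c) = prefixMarginal P k hk.le y v := by
  have hfilter (c : ZMod 2) :
      ({u | Fin.take (k + 1) hk u = Fin.snoc v c} : Finset (Fin N → ZMod 2))
        = ({u | Fin.take k hk.le u = v} : Finset (Fin N → ZMod 2)).filter (· ⟨k, hk⟩ = c) := by
    ext u
    simp [Fin.take_succ_eq_snoc, Fin.snoc_inj]
  simp only [prefixMarginal, hfilter]
  exact Finset.sum_fiberwise _ _ _

lemma prefixMarginal_self (y : Ω) (v : Fin N → ZMod 2) :
    prefixMarginal P N le_rfl y v = P v y := by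
  simp [prefixMarginal, Fin.take_eq_self, Finset.filter_eq']

lemma prefixMarginal_zero (y : Ω) (v : Fin 0 → ZMod 2) :
    prefixMarginal P 0 N.zero_le y v = ∑ u, P u y := by
  simp [prefixMarginal, Subsingleton.elim _ v]

variable {P}

lemma symCap_prefixChannel [Fintype Ω] (hP : ∀ u y, 0 ≤ P u y) (hP₁ : ∑ u, ∑ y, P u y = 1)
    (i : Fin N) :
    symCap (prefixChannel P i)
      = 1 + prefixNegEntropy P (i + 1) i.isLt - prefixNegEntropy P i i.isLt.le := by
  have hsnoc (y : Ω) : ∑ x, ∑ w, mulLogb 2 (prefixMarginal P (i + 1) i.isLt y (Fin.snoc w x))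
      = ∑ v, mulLogb 2 (prefixMarginal P (i + 1) i.isLt y v) := by
    rw [← (Fin.snocEquiv fun _ => ZMod 2).sum_comp, Fintype.sum_prod_type]
    rfl
  have hdiv (x : ZMod 2) (o : Ω × (Fin i → ZMod 2)) : prefixChannel P i x o / 2
      = prefixMarginal P (i + 1) i.isLt o.1 (Fin.snoc o.2 x) :=
    mul_div_cancel_left₀ _ two_ne_zero
  have hmass : ∑ x, ∑ o, prefixChannel P i x o = 2 := by
    simp only [prefixChannel, ← Finset.mul_sum, Fintype.sum_prod_type]
    rw [Finset.sum_comm]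
    simp only [Finset.sum_comm (γ := ZMod 2), sum_prefixMarginal_snoc, sum_prefixMarginal]
    rw [Finset.sum_comm, hP₁, mul_one]
  have hK (x : ZMod 2) (o : Ω × (Fin i → ZMod 2)) : 0 ≤ prefixChannel P i x o :=
    mul_nonneg zero_le_two (Finset.sum_nonneg fun u _ => hP u o.1)
  rw [symCap_eq_one_add_sub (prefixChannel P i) hK hmass]
  simp only [hdiv, Fintype.sum_prod_type, sum_prefixMarginal_snoc]
  rw [Finset.sum_comm, Finset.sum_congr rfl fun y _ => hsnoc y]
  rfl

lemma sum_symCap_prefixChannel [Fintype Ω] (hP : ∀ u y, 0 ≤ P u y)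
    (hP₁ : ∑ u, ∑ y, P u y = 1) :
    ∑ i, symCap (prefixChannel P i)
      = N + ∑ y, ∑ u, mulLogb 2 (P u y) - ∑ y, mulLogb 2 (∑ u, P u y) := by
  simp only [symCap_prefixChannel hP hP₁, add_sub_assoc]
  rw [Finset.sum_add_distrib, Fin.sum_sub_telescope (prefixNegEntropy P)]
  simp [prefixNegEntropy, prefixMarginal_self, prefixMarginal_zero]

end ChainRule

lemma kron_mul {a b : ℕ} (A C : Matrix (Fin a) (Fin a) (ZMod 2))
    (B D : Matrix (Fin b) (Fin b) (ZMod 2)) :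
    kron A B * kron C D = kron (A * C) (B * D) := by
  simp only [kron, Matrix.reindex_apply, Matrix.submatrix_mul_equiv, Matrix.mul_kronecker_mul]

lemma kron_one {a b : ℕ} :
    kron (1 : Matrix (Fin a) (Fin a) (ZMod 2)) (1 : Matrix (Fin b) (Fin b) (ZMod 2)) = 1 := by
  simp [kron]

lemma kronPow_mul (A B : Matrix (Fin 2) (Fin 2) (ZMod 2)) (n : ℕ) :
    kronPow A n * kronPow B n = kronPow (A * B) n := by
  induction n with
  | zero => simp [kronPow]
  | succ n ih =>
    simp only [kronPow, Matrix.reindex_apply, Matrix.submatrix_mul_equiv, kron_mul, ih]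

lemma kronPow_one (n : ℕ) : kronPow 1 n = 1 := by
  induction n with
  | zero => rfl
  | succ n ih => simp [kronPow, ih, kron_one]

lemma isUnit_polarG (n : ℕ) : IsUnit (polarG n) := by
  have hF : polarKernel * polarKernel = 1 := by decide
  refine .mul (.of_mul_eq_one ((bitRev n)⁻¹.permMatrix (ZMod 2)) ?_)
    (.of_mul_eq_one (kronPow polarKernel n) ?_)
  · rw [← Matrix.permMatrix_mul, inv_mul_cancel, Matrix.permMatrix_one]
  · rw [kronPow_mul, hF, kronPow_one]

lemma polarEncode_bijective (n : ℕ) : Function.Bijective (polarEncode n) :=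
  Finite.injective_iff_bijective.mp (Matrix.vecMul_injective_iff_isUnit.mpr (isUnit_polarG n))

section PolarJoint

variable (n : ℕ) (Y : Fin (2 ^ n) → Type) (W : ∀ j, ZMod 2 → Y j → ℝ)

noncomputable def polarJoint (u : Fin (2 ^ n) → ZMod 2) (y : ∀ j, Y j) : ℝ :=
  ∏ j, W j (polarEncode n u j) (y j) / 2

lemma bitChannel_eq_prefixChannel [∀ j, Fintype (Y j)] (i : Fin (2 ^ n)) :
    bitChannel n Y W i = prefixChannel (polarJoint n Y W) i := by
  ext x ⟨y, w⟩
  have hprefix (u : Fin (2 ^ n) → ZMod 2) :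
      (u i = x ∧ ∀ j : Fin i, u (Fin.castLE i.isLt.le j) = w j)
        ↔ Fin.take (i + 1) i.isLt u = Fin.snoc w x := by
    rw [Fin.take_succ_eq_snoc, Fin.snoc_inj, funext_iff, Fin.eta, and_comm]
    rfl
  have hscale : (1 / 2 : ℝ) ^ (2 ^ n - 1) = 2 * (2 ^ 2 ^ n)⁻¹ := by
    rw [pow_sub₀ _ (by norm_num) Nat.one_le_two_pow, one_div, inv_pow, pow_one, inv_inv,
      mul_comm]
  simp only [bitChannel, prefixChannel, prefixMarginal, polarJoint, Finset.sum_filter, hprefix,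
    hscale, Finset.prod_div_distrib, Finset.prod_const, Finset.card_univ, Fintype.card_fin]
  rw [mul_assoc, Finset.mul_sum]
  congr 1
  refine Finset.sum_congr rfl fun u _ => ?_
  split_ifs <;> ring

variable {n Y W}

lemma polarJoint_nonneg [∀ j, Fintype (Y j)] (hW : ∀ j, IsBDMC (W j))
    (u : Fin (2 ^ n) → ZMod 2) (y : ∀ j, Y j) :
    0 ≤ polarJoint n Y W u y :=
  Finset.prod_nonneg fun j _ => div_nonneg ((hW j).1 _ _) zero_le_two

lemma sum_polarJoint (y : ∀ j, Y j) :
    ∑ u, polarJoint n Y W u y = ∏ j, ∑ x, W j x (y j) / 2 := by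
  rw [Fintype.prod_sum]
  exact (polarEncode_bijective n).sum_comp fun x => ∏ j, W j (x j) (y j) / 2

lemma sum_sum_polarJoint [∀ j, Fintype (Y j)] (hW : ∀ j, IsBDMC (W j)) :
    ∑ u, ∑ y, polarJoint n Y W u y = 1 := by
  rw [Finset.sum_comm]
  simp only [sum_polarJoint]
  rw [← Fintype.prod_sum fun j t => ∑ x, W j x t / 2]
  simp only [(hW _).sum_sum_div_two, Finset.prod_const_one]

lemma sum_mulLogb_polarJoint [∀ j, Fintype (Y j)] (hW : ∀ j, IsBDMC (W j)) :
    ∑ y, ∑ u, mulLogb 2 (polarJoint n Y W u y) = ∑ j, ∑ x, ∑ t, mulLogb 2 (W j x t / 2) := by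
  have hbij (y : ∀ j, Y j) : ∑ u, mulLogb 2 (polarJoint n Y W u y)
      = ∑ x : Fin (2 ^ n) → ZMod 2, mulLogb 2 (∏ j, W j (x j) (y j) / 2) :=
    (polarEncode_bijective n).sum_comp fun x => mulLogb 2 (∏ j, W j (x j) (y j) / 2)
  have hmass (j : Fin (2 ^ n)) : ∑ p : ZMod 2 × Y j, W j p.1 p.2 / 2 = 1 := by
    rw [Fintype.sum_prod_type, Finset.sum_comm, (hW j).sum_sum_div_two]
  simp only [hbij]
  rw [Finset.sum_comm, ← Fintype.sum_prod_type',
    ← (Equiv.arrowProdEquivProdArrow _ (fun _ => ZMod 2) Y).sum_comp]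
  simp only [Equiv.arrowProdEquivProdArrow_apply]
  refine (sum_mulLogb_prod 2 (fun j (p : ZMod 2 × Y j) => W j p.1 p.2 / 2) hmass).trans ?_
  simp only [Fintype.sum_prod_type]

lemma sum_mulLogb_sum_polarJoint [∀ j, Fintype (Y j)] (hW : ∀ j, IsBDMC (W j)) :
    ∑ y, mulLogb 2 (∑ u, polarJoint n Y W u y) = ∑ j, ∑ t, mulLogb 2 (∑ x, W j x t / 2) := by
  simp only [sum_polarJoint]
  exact sum_mulLogb_prod 2 _ fun j => (hW j).sum_sum_div_two

end PolarJoint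

/-- Chain-rule sum-capacity conservation for the full polar transform over
possibly different channels: `Σ_{i=1}^{N} I(W_N^{(i)}) = Σ_{j=1}^{N} I(W_j)` for `N = 2^n`. -/
theorem polar_sum_capacity (n : ℕ) (Y : Fin (2 ^ n) → Type) [∀ j, Fintype (Y j)]
    (W : ∀ j, ZMod 2 → Y j → ℝ) (hW : ∀ j, IsBDMC (W j)) :
    ∑ i, symCap (bitChannel n Y W i) = ∑ j, symCap (W j) := by
  calc ∑ i, symCap (bitChannel n Y W i) = ∑ i, symCap (prefixChannel (polarJoint n Y W) i) := by
        simp only [bitChannel_eq_prefixChannel]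
    _ = 2 ^ n + ∑ y, ∑ u, mulLogb 2 (polarJoint n Y W u y)
          - ∑ y, mulLogb 2 (∑ u, polarJoint n Y W u y) := by
        exact_mod_cast sum_symCap_prefixChannel (polarJoint_nonneg hW) (sum_sum_polarJoint hW)
    _ = ∑ j, (1 + ∑ x, ∑ t, mulLogb 2 (W j x t / 2) - ∑ t, mulLogb 2 (∑ x, W j x t / 2)) := by
        rw [sum_mulLogb_polarJoint hW, sum_mulLogb_sum_polarJoint hW]
        simp [Finset.sum_add_distrib, Finset.sum_sub_distrib]
    _ = ∑ j, symCap (W j) := by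
        simp only [symCap_eq_one_add_sub (W _) (hW _).1 (hW _).sum_sum_eq_two]
end
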